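/- arXiv:1508.05853 — 2 statements merged into one kernel-verified Lean document; each statement's English description precedes it below -/
import Mathlib

section
/- Let f_{μν} be a nonzero real antisymmetric 4×4 matrix and k ∈ ℝ⁴ a covector satisfying the Hadamard discontinuity relations of the vacuum Maxwell equations: f^{μν} k_ν = 0 for all μ, and the cyclic identity f_{μν} k_λ + f_{νλ} k_μ + f_{λμ} k_ν = 0 for all μ, ν, λ. Then k is a null vector of the Minkowski metric: η^{μν} k_μ k_ν = 0. -/
/-!
Contracting the cyclic identity with `k^λ = η^{λρ} k_ρ` and using antisymmetry gives
`f_{μν} (k·k) + k_μ f_{νλ} k^λ - k_ν f_{μλ} k^λ = 0`. Since `η` is invertible, `f^{μν} k_ν = 0`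
is equivalent to `f_{μλ} k^λ = 0`, so `f_{μν} (k·k) = 0` for all `μ, ν`, and a nonzero
component of `f` forces `k·k = 0`.
-/

open scoped BigOperators

noncomputable section

/-- The Minkowski metric η = diag(1,-1,-1,-1) (same components for η_{μν} and η^{μν}). -/
def η (μ ν : Fin 4) : ℝ := if μ = ν then (if μ = 0 then 1 else -1) else 0

open Matrix Finset

section Contraction

variable {ι R : Type*} [Fintype ι] [CommRing R]

theorem mul_mul_transpose_apply (g f : Matrix ι ι R) (μ ν : ι) :
    (g * f * gᵀ) μ ν = ∑ α, ∑ β, g μ α * g ν β * f α β := by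
  simp only [mul_apply, transpose_apply, sum_mul]
  rw [sum_comm]
  exact sum_congr rfl fun _ _ => sum_congr rfl fun _ _ => by ring

theorem sum_sum_mul_mul_eq_dotProduct_mulVec (g : Matrix ι ι R) (k : ι → R) :
    ∑ μ, ∑ ν, g μ ν * k μ * k ν = k ⬝ᵥ (g *ᵥ k) := by
  simp only [dotProduct, mulVec, mul_sum]
  exact sum_congr rfl fun _ _ => sum_congr rfl fun _ _ => by ring

theorem mulVec_mulVec_transpose_eq_zero [DecidableEq ι] {g ginv f : Matrix ι ι R} {k : ι → R}
    (hinv : ginv * g = 1) (h : (g * f * gᵀ) *ᵥ k = 0) : f *ᵥ (gᵀ *ᵥ k) = 0 :=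
  calc f *ᵥ (gᵀ *ᵥ k) = ginv *ᵥ ((g * f * gᵀ) *ᵥ k) := by
        rw [mulVec_mulVec, mulVec_mulVec, Matrix.mul_assoc, ← Matrix.mul_assoc ginv, hinv,
          Matrix.one_mul]
    _ = 0 := by rw [h, mulVec_zero]

theorem mul_dotProduct_eq_zero_of_cyclic {f : Matrix ι ι R} {k u : ι → R}
    (hfa : ∀ μ ν, f μ ν = -f ν μ) (hfu : f *ᵥ u = 0)
    (hcyc : ∀ μ ν l, f μ ν * k l + f ν l * k μ + f l μ * k ν = 0) (μ ν : ι) :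
    f μ ν * (k ⬝ᵥ u) = 0 := by
  have hrow : ∀ a, ∑ l, f a l * u l = 0 := fun a => congrFun hfu a
  have hcol : ∀ a, ∑ l, f l a * u l = 0 := fun a => by
    simp_rw [hfa _ a, neg_mul, sum_neg_distrib, hrow, neg_zero]
  calc f μ ν * (k ⬝ᵥ u)
      = f μ ν * (k ⬝ᵥ u) + k μ * ∑ l, f ν l * u l + k ν * ∑ l, f l μ * u l := by
        rw [hrow, hcol]; ring
    _ = ∑ l, (f μ ν * k l + f ν l * k μ + f l μ * k ν) * u l := by
        rw [dotProduct, mul_sum, mul_sum, mul_sum, ← sum_add_distrib, ← sum_add_distrib]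
        exact sum_congr rfl fun _ _ => by ring
    _ = 0 := sum_eq_zero fun l _ => by rw [hcyc, zero_mul]

end Contraction

theorem η_eq_diagonal : of η = diagonal ![1, -1, -1, -1] := by
  ext i j
  fin_cases i <;> fin_cases j <;> rfl

theorem η_transpose : (of η)ᵀ = of η := by
  rw [η_eq_diagonal, diagonal_transpose]

theorem η_mul_self : of η * of η = 1 := by
  rw [η_eq_diagonal, diagonal_mul_diagonal, ← diagonal_one]
  congr 1
  ext i
  fin_cases i <;> norm_num

/-- Hadamard discontinuity relations of the vacuum Maxwell equations force
the wave covector to be null in the Minkowski metric. -/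
theorem maxwell_discontinuity_null
    (f : Fin 4 → Fin 4 → ℝ) (k : Fin 4 → ℝ)
    (hfa : ∀ μ ν, f μ ν = - f ν μ)
    (hf0 : f ≠ 0)
    -- raised components f^{μν} = η^{μα}η^{νβ} f_{αβ}
    (fup : Fin 4 → Fin 4 → ℝ)
    (hfup : ∀ μ ν, fup μ ν = ∑ α, ∑ b, η μ α * η ν b * f α b)
    -- f^{μν} k_ν = 0
    (h1 : ∀ μ, ∑ ν, fup μ ν * k ν = 0)
    -- cyclic identity
    (h2 : ∀ μ ν l, f μ ν * k l + f ν l * k μ + f l μ * k ν = 0) :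
    ∑ μ, ∑ ν, η μ ν * k μ * k ν = 0 := by
  have hfup' : of fup = of η * of f * (of η)ᵀ :=
    funext₂ fun μ ν => by rw [mul_mul_transpose_apply, of_apply, hfup]; rfl
  have hlowered : of f *ᵥ ((of η)ᵀ *ᵥ k) = 0 :=
    mulVec_mulVec_transpose_eq_zero η_mul_self (hfup' ▸ funext h1)
  obtain ⟨μ, ν, hμν⟩ : ∃ μ ν, f μ ν ≠ 0 := by simpa [funext_iff] using hf0
  have hnull : k ⬝ᵥ ((of η)ᵀ *ᵥ k) = 0 :=
    (mul_eq_zero.mp (mul_dotProduct_eq_zero_of_cyclic hfa hlowered h2 μ ν)).resolve_left hμν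
  rwa [η_transpose, ← sum_sum_mul_mul_eq_dotProduct_mulVec] at hnull
end
end

section
/- Let U ⊆ ℝ⁴ be open, v : U → ℝ⁴ a smooth vector field with η_{μν} v^μ v^ν = 1, and Ψ : U → ℝ a smooth function such that the derivative of v has the rigid, geodesic-deviation-free form ∂_ν v_μ = (∂_μ Ψ) v_ν at every point (i.e. the congruence has no expansion, no shear, no vorticity, and its acceleration is the gradient a_μ = ∂_μ Ψ). Then Ψ satisfies the flat wave equation: η^{μν} ∂_μ ∂_ν Ψ = 0 on U. -/
open scoped BigOperators
open Matrix

noncomputable section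

/-- Partial derivative ∂_μ of a real-valued function on ℝ⁴ (Cartesian coordinates). -/
def pd (μ : Fin 4) (f : (Fin 4 → ℝ) → ℝ) (x : Fin 4 → ℝ) : ℝ :=
  fderiv ℝ f x (Pi.single μ 1)

/-- Christoffel symbols Γ^σ_{μν} = ½ g^{σρ}(∂_ν g_{ρμ} + ∂_μ g_{ρν} − ∂_ρ g_{μν})
of a metric with covariant components `g` and contravariant components `ginv`. -/
def christoffel (ginv g : (Fin 4 → ℝ) → Fin 4 → Fin 4 → ℝ)
    (x : Fin 4 → ℝ) (σ μ ν : Fin 4) : ℝ :=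
  (1 / 2) * ∑ ρ, ginv x σ ρ *
    (pd ν (fun y => g y ρ μ) x + pd μ (fun y => g y ρ ν) x - pd ρ (fun y => g y μ ν) x)

lemma pd_congr {f g : (Fin 4 → ℝ) → ℝ} {x : Fin 4 → ℝ} (μ : Fin 4)
    (h : f =ᶠ[nhds x] g) : pd μ f x = pd μ g x := by
  simp only [pd, h.fderiv_eq]

lemma pd_const (μ : Fin 4) (x : Fin 4 → ℝ) (a : ℝ) : pd μ (fun _ => a) x = 0 := by
  simp [pd]

lemma pd_mul {f g : (Fin 4 → ℝ) → ℝ} {x : Fin 4 → ℝ} (μ : Fin 4)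
    (hf : DifferentiableAt ℝ f x) (hg : DifferentiableAt ℝ g x) :
    pd μ (fun y => f y * g y) x = pd μ f x * g x + f x * pd μ g x := by
  simp only [pd]
  rw [fderiv_fun_mul hf hg]
  simp [smul_eq_mul]
  ring

lemma pd_const_mul {f : (Fin 4 → ℝ) → ℝ} {x : Fin 4 → ℝ} (μ : Fin 4) (a : ℝ)
    (hf : DifferentiableAt ℝ f x) :
    pd μ (fun y => a * f y) x = a * pd μ f x := by
  simp only [pd]
  rw [fderiv_const_mul hf]
  simp

lemma pd_sum {F : Fin 4 → (Fin 4 → ℝ) → ℝ} {x : Fin 4 → ℝ} (μ : Fin 4)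
    (hF : ∀ i, DifferentiableAt ℝ (F i) x) :
    pd μ (fun y => ∑ i, F i y) x = ∑ i, pd μ (F i) x := by
  simp only [pd]
  rw [fderiv_fun_sum (fun i _ => hF i)]
  simp

lemma contDiffAt_pd {f : (Fin 4 → ℝ) → ℝ} {x : Fin 4 → ℝ} (ν : Fin 4)
    (hf : ContDiffAt ℝ (⊤ : ℕ∞) f x) : ContDiffAt ℝ (⊤ : ℕ∞) (fun y => pd ν f y) x := by
  have h1 : ContDiffAt ℝ (⊤ : ℕ∞) (fderiv ℝ f) x := hf.fderiv_right (by simp)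
  exact h1.clm_apply contDiffAt_const

lemma pd_comm {f : (Fin 4 → ℝ) → ℝ} {x : Fin 4 → ℝ} (μ ν : Fin 4)
    (hf : ContDiffAt ℝ (⊤ : ℕ∞) f x) :
    pd μ (fun y => pd ν f y) x = pd ν (fun y => pd μ f y) x := by
  have hsym := hf.isSymmSndFDerivAt (by rw [minSmoothness_of_isRCLikeNormedField]; exact WithTop.coe_le_coe.mpr le_top)
  have hd : DifferentiableAt ℝ (fderiv ℝ f) x :=
    (hf.fderiv_right (m := (⊤ : ℕ∞)) (by simp)).differentiableAt (by simp)
  have comp : ∀ a b : Fin 4 → ℝ,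
      fderiv ℝ (fun y => fderiv ℝ f y b) x a = fderiv ℝ (fderiv ℝ f) x a b := by
    intro a b
    rw [fderiv_clm_apply hd (differentiableAt_const b)]
    simp
  simp only [pd]
  rw [comp, comp, hsym]

lemma eta_sum (a : Fin 4 → ℝ) (μ : Fin 4) :
    ∑ ν, η μ ν * a ν = (if μ = 0 then (1:ℝ) else -1) * a μ := by
  simp [η, ite_mul, Finset.sum_ite_eq]

/-- for a unit-normalized congruence with ∂_ν v_μ = (∂_μΨ) v_ν
(no expansion, shear, or vorticity; acceleration a gradient), the potential Ψ satisfies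
the flat wave equation η^{μν}∂_μ∂_νΨ = 0. -/
theorem rigid_gradient_congruence_wave_equation
    (U : Set (Fin 4 → ℝ)) (hU : IsOpen U)
    (v : Fin 4 → (Fin 4 → ℝ) → ℝ) (Ψ : (Fin 4 → ℝ) → ℝ)
    (hv : ∀ μ, ContDiffOn ℝ (⊤ : ℕ∞) (v μ) U) (hΨ : ContDiffOn ℝ (⊤ : ℕ∞) Ψ U)
    -- lowered components v_μ = η_{μν}v^ν
    (vlow : Fin 4 → (Fin 4 → ℝ) → ℝ)
    (hvlow : ∀ μ x, vlow μ x = ∑ ν, η μ ν * v ν x)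
    -- normalization
    (hnorm : ∀ x ∈ U, ∑ μ, ∑ ν, η μ ν * v μ x * v ν x = 1)
    -- ∂_ν v_μ = (∂_μΨ) v_ν
    (hrigid : ∀ x ∈ U, ∀ μ ν, pd ν (vlow μ) x = pd μ Ψ x * vlow ν x) :
    ∀ x ∈ U, ∑ μ, ∑ ν, η μ ν * pd μ (fun y => pd ν Ψ y) x = 0 := by
  -- notation: c μ = ±1 sign
  set c : Fin 4 → ℝ := fun μ => if μ = 0 then 1 else -1 with hc
  have hcc : ∀ μ, c μ * c μ = 1 := by
    intro μ; simp only [hc]; split_ifs <;> norm_num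
  have hcases : ∀ μ, c μ = 1 ∨ c μ = -1 := by
    intro μ; simp only [hc]; split_ifs <;> simp
  -- vlow as a function
  have hvlowf : ∀ μ, vlow μ = fun y => c μ * v μ y := by
    intro μ; funext y; rw [hvlow, eta_sum]
  -- smoothness of vlow on U
  have hwC : ∀ μ, ∀ y ∈ U, ContDiffAt ℝ (⊤ : ℕ∞) (vlow μ) y := by
    intro μ y hy
    rw [hvlowf μ]
    exact contDiffAt_const.mul ((hv μ).contDiffAt (hU.mem_nhds hy))
  have hwd : ∀ μ, ∀ y ∈ U, DifferentiableAt ℝ (vlow μ) y :=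
    fun μ y hy => (hwC μ y hy).differentiableAt (by simp)
  have hΨC : ∀ y ∈ U, ContDiffAt ℝ (⊤ : ℕ∞) Ψ y := fun y hy => hΨ.contDiffAt (hU.mem_nhds hy)
  have hDd : ∀ ν, ∀ y ∈ U, DifferentiableAt ℝ (fun z => pd ν Ψ z) y :=
    fun ν y hy => (contDiffAt_pd ν (hΨC y hy)).differentiableAt (by simp)
  -- normalization in terms of vlow
  have hnorm2 : ∀ y ∈ U, ∑ μ, c μ * (vlow μ y * vlow μ y) = 1 := by
    intro y hy
    have h1 := hnorm y hy
    rw [← h1]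
    apply Finset.sum_congr rfl
    intro μ _
    have h2 : ∀ ν, η μ ν * v μ y * v ν y = v μ y * (η μ ν * v ν y) := fun ν => by ring
    simp only [h2]
    rw [← Finset.mul_sum, eta_sum]
    rw [hvlowf]
    have hcμ : (if μ = 0 then (1:ℝ) else -1) = c μ := rfl
    rw [hcμ]
    rcases hcases μ with h | h <;> rw [h] <;> ring
  -- the scalar S = v^ν ∂_ν Ψ vanishes on U
  set S : (Fin 4 → ℝ) → ℝ := fun y => ∑ ν, c ν * (vlow ν y * pd ν Ψ y) with hSdef
  have hS0 : ∀ y ∈ U, S y = 0 := by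
    intro y hy
    -- differentiate the normalization
    have hNev : (fun z => ∑ μ, c μ * (vlow μ z * vlow μ z)) =ᶠ[nhds y] (fun _ => (1:ℝ)) := by
      filter_upwards [hU.mem_nhds hy] with z hz using hnorm2 z hz
    have key : ∀ ν, S y * vlow ν y = 0 := by
      intro ν
      have hz : pd ν (fun z => ∑ μ, c μ * (vlow μ z * vlow μ z)) y = 0 := by
        rw [pd_congr ν hNev, pd_const]
      have hdi : ∀ μ, DifferentiableAt ℝ (fun z => c μ * (vlow μ z * vlow μ z)) y :=
        fun μ => ((hwd μ y hy).mul (hwd μ y hy)).const_mul _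
      rw [pd_sum ν hdi] at hz
      have he : ∀ μ, pd ν (fun z => c μ * (vlow μ z * vlow μ z)) y
          = c μ * (2 * (pd μ Ψ y * vlow μ y)) * vlow ν y := by
        intro μ
        rw [pd_const_mul ν _ ((hwd μ y hy).fun_mul (hwd μ y hy)),
          pd_mul ν (hwd μ y hy) (hwd μ y hy), hrigid y hy]
        ring
      simp only [he] at hz
      calc S y * vlow ν y = (1/2) * ∑ μ, c μ * (2 * (pd μ Ψ y * vlow μ y)) * vlow ν y := by
            rw [hSdef, Finset.sum_mul, Finset.mul_sum]
            apply Finset.sum_congr rfl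
            intro μ _; ring
        _ = 0 := by rw [hz]; ring
    calc S y = S y * ∑ μ, c μ * (vlow μ y * vlow μ y) := by rw [hnorm2 y hy]; ring
      _ = ∑ μ, c μ * vlow μ y * (S y * vlow μ y) := by
            rw [Finset.mul_sum]; apply Finset.sum_congr rfl; intro μ _; ring
      _ = 0 := by simp only [key]; simp
  -- now work at the point x
  intro x hx
  set W : Fin 4 → ℝ := fun ν => vlow ν x with hW
  set D : Fin 4 → ℝ := fun ν => pd ν Ψ x with hD
  set H : Fin 4 → Fin 4 → ℝ := fun μ σ => pd σ (fun y => pd μ Ψ y) x with hH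
  set A : ℝ := ∑ ν, c ν * (D ν * D ν) with hA
  have hNx : ∑ ν, c ν * (W ν * W ν) = 1 := hnorm2 x hx
  have hSx : ∑ ν, c ν * (W ν * D ν) = 0 := hS0 x hx
  have Hsymm : ∀ μ ν, H μ ν = H ν μ := fun μ ν => pd_comm ν μ (hΨC x hx)
  -- differentiate S = 0 : A * W μ + Σ_ν c ν W ν H ν μ = 0
  have hTB : ∀ μ, A * W μ + ∑ ν, c ν * (W ν * H ν μ) = 0 := by
    intro μ
    have hz : pd μ S x = 0 := by
      have hev : S =ᶠ[nhds x] (fun _ => (0:ℝ)) := by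
        filter_upwards [hU.mem_nhds hx] with z hz using hS0 z hz
      rw [pd_congr μ hev, pd_const]
    have hdi : ∀ ν, DifferentiableAt ℝ (fun z => c ν * (vlow ν z * pd ν Ψ z)) x :=
      fun ν => ((hwd ν x hx).mul (hDd ν x hx)).const_mul _
    rw [hSdef] at hz
    rw [pd_sum μ hdi] at hz
    have he : ∀ ν, pd μ (fun z => c ν * (vlow ν z * pd ν Ψ z)) x
        = c ν * (D ν * D ν) * W μ + c ν * (W ν * H ν μ) := by
      intro ν
      rw [pd_const_mul μ _ ((hwd ν x hx).fun_mul (hDd ν x hx)),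
        pd_mul μ (hwd ν x hx) (hDd ν x hx), hrigid x hx]
      simp only [hW, hD, hH]
      ring
    simp only [he] at hz
    rw [Finset.sum_add_distrib, ← Finset.sum_mul, ← hA] at hz
    linarith [hz]
  -- symmetry of second derivatives of vlow: the key relation
  have hrel : ∀ μ σ ν, H μ σ * W ν + D μ * (D ν * W σ) = H μ ν * W σ + D μ * (D σ * W ν) := by
    intro μ σ ν
    have hcomm := pd_comm σ ν (hwC μ x hx)
    have hexp : ∀ ρ τ : Fin 4,
        pd τ (fun y => pd ρ (vlow μ) y) x = H μ τ * W ρ + D μ * (pd τ (vlow ρ) x) := by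
      intro ρ τ
      have hev : (fun y => pd ρ (vlow μ) y) =ᶠ[nhds x] (fun y => pd μ Ψ y * vlow ρ y) := by
        filter_upwards [hU.mem_nhds hx] with z hz using hrigid z hz μ ρ
      rw [pd_congr τ hev, pd_mul τ (hDd μ x hx) (hwd ρ x hx)]
    rw [hexp ν σ, hexp σ ν, hrigid x hx, hrigid x hx] at hcomm
    simp only [hW, hD] at hcomm
    linarith [hcomm]
  -- contract the relation: H μ σ = (Σ_ν c ν W ν H μ ν) W σ + D μ D σ
  have hHform : ∀ μ σ, H μ σ = (∑ ν, c ν * (W ν * H μ ν)) * W σ + D μ * D σ := by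
    intro μ σ
    have h1 : ∑ ν, c ν * (W ν * (H μ σ * W ν + D μ * (D ν * W σ)))
        = ∑ ν, c ν * (W ν * (H μ ν * W σ + D μ * (D σ * W ν))) :=
      Finset.sum_congr rfl fun ν _ => by rw [hrel μ σ ν]
    have e1 : ∑ ν, c ν * (W ν * (H μ σ * W ν + D μ * (D ν * W σ)))
        = H μ σ * (∑ ν, c ν * (W ν * W ν)) + (D μ * W σ) * (∑ ν, c ν * (W ν * D ν)) := by
      rw [Finset.mul_sum, Finset.mul_sum, ← Finset.sum_add_distrib]
      exact Finset.sum_congr rfl fun ν _ => by ring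
    have e2 : ∑ ν, c ν * (W ν * (H μ ν * W σ + D μ * (D σ * W ν)))
        = (∑ ν, c ν * (W ν * H μ ν)) * W σ + (D μ * D σ) * (∑ ν, c ν * (W ν * W ν)) := by
      rw [Finset.sum_mul, Finset.mul_sum, ← Finset.sum_add_distrib]
      exact Finset.sum_congr rfl fun ν _ => by ring
    rw [e1, e2, hNx, hSx] at h1
    linarith [h1]
  -- combine: H μ μ = -A W μ W μ + D μ D μ
  have hHμμ : ∀ μ, H μ μ = -(A * (W μ * W μ)) + D μ * D μ := by
    intro μ
    have h2 : ∑ ν, c ν * (W ν * H μ ν) = - (A * W μ) := by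
      have h3 : ∑ ν, c ν * (W ν * H μ ν) = ∑ ν, c ν * (W ν * H ν μ) :=
        Finset.sum_congr rfl fun ν _ => by rw [Hsymm μ ν]
      have := hTB μ
      linarith [h3, this]
    rw [hHform μ μ, h2]; ring
  -- finish
  have hgoal : ∀ μ, ∑ ν, η μ ν * pd μ (fun y => pd ν Ψ y) x = c μ * H μ μ := by
    intro μ
    rw [eta_sum (fun ν => pd μ (fun y => pd ν Ψ y) x) μ]
  simp only [hgoal]
  calc ∑ μ, c μ * H μ μ = ∑ μ, (-(A * (c μ * (W μ * W μ))) + c μ * (D μ * D μ)) := by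
        apply Finset.sum_congr rfl
        intro μ _; rw [hHμμ μ]; ring
    _ = -(A * ∑ μ, c μ * (W μ * W μ)) + ∑ μ, c μ * (D μ * D μ) := by
        rw [Finset.sum_add_distrib, Finset.mul_sum, ← Finset.sum_neg_distrib]
    _ = 0 := by rw [hNx, ← hA]; ring
end
end
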